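/- Let N ≥ 2, e_N = (0,...,0,1) ∈ ℝ^N, and for φ ∈ (0,π) let Λ^φ = {x ∈ ℝ^N \ {0} : (x/|x|)·e_N > cos φ}. If φ ∈ [π/2, π), then for every R > 0 the open R-neighborhood N[Λ^φ, R] = {x ∈ ℝ^N : dist(x, Λ^φ) < R} equals the translated cone Λ^φ − (R/ sin φ) e_N. -/

import Mathlib

open scoped RealInnerProductSpace
open Set Metric

noncomputable section

/-- Ambient Euclidean space `ℝ^N` with `N = n + 1`, written as `ℝ^{N-1} × ℝ`
(with the `L²` norm), so that the last coordinate is directly accessible. -/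
abbrev Amb (n : ℕ) := WithLp 2 (EuclideanSpace ℝ (Fin n) × ℝ)

/-- The last coordinate `x_N` of a point. -/
def lastCoord (n : ℕ) (x : Amb n) : ℝ := (WithLp.equiv 2 (EuclideanSpace ℝ (Fin n) × ℝ) x).2

/-- The unit vector `e_N = (0, …, 0, 1)`. -/
def eVec (n : ℕ) : Amb n := (WithLp.equiv 2 (EuclideanSpace ℝ (Fin n) × ℝ)).symm (0, 1)

/-- The open cone `Λ^φ = {x ∈ ℝ^N \ {0} : (x/|x|)·e_N > cos φ}` with vertex `0`,
axis `e_N` and half-opening angle `φ`. -/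
def cone (n : ℕ) (φ : ℝ) : Set (Amb n) :=
  {x | x ≠ 0 ∧ ‖x‖ * Real.cos φ < lastCoord n x}

/-!
Write `x = (x', x_N)` and `f(x) = coneLevel φ x = cos φ ‖x'‖ - sin φ x_N`.
For `φ ∈ [π/2, π)` the cone `Λ^φ` is `{f < 0}`. Since `(cos φ, sin φ)` is a unit vector,
`f` is 1-Lipschitz, and moving from `x` along the unit vector `(-cos φ · x'/‖x'‖, sin φ)`
lowers `f` at exactly unit speed. Hence `dist(x, Λ^φ) = max(f(x), 0)`, while
`x + (R / sin φ) e_N ∈ Λ^φ` iff `f(x) < R`.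
-/

open Real

section ConeLevel

variable {F : Type*} [NormedAddCommGroup F]

lemma exists_norm_eq_one_smul_eq [NormedSpace ℝ F] [Nontrivial F] (x : F) :
    ∃ u : F, ‖u‖ = 1 ∧ ‖x‖ • u = x := by
  by_cases hx : x = 0
  · obtain ⟨u, hu⟩ := exists_norm_eq F zero_le_one
    exact ⟨u, hu, by simp [hx]⟩
  · exact ⟨NormedSpace.normalize x, NormedSpace.norm_normalize_eq_one_iff.mpr hx,
      NormedSpace.norm_smul_normalize x⟩

def coneLevel (φ : ℝ) (x : WithLp 2 (F × ℝ)) : ℝ := cos φ * ‖x.fst‖ - sin φ * x.snd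

lemma coneLevel_le_add_dist (φ : ℝ) (x y : WithLp 2 (F × ℝ)) :
    coneLevel φ x ≤ coneLevel φ y + dist x y := by
  set a := ‖x.fst - y.fst‖
  set b := |x.snd - y.snd|
  have hdist : dist x y ^ 2 = a ^ 2 + b ^ 2 := by
    rw [dist_eq_norm, WithLp.prod_norm_sq_eq_of_L2, WithLp.sub_fst, WithLp.sub_snd,
      Real.norm_eq_abs]
  have hfst : cos φ * (‖x.fst‖ - ‖y.fst‖) ≤ |cos φ| * a :=
    (le_abs_self _).trans <| by
      rw [abs_mul]; gcongr; exact abs_norm_sub_norm_le _ _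
  have hsnd : -(sin φ * (x.snd - y.snd)) ≤ |sin φ| * b := by
    rw [← abs_mul]; exact neg_le_abs _
  have hcauchy : (|cos φ| * a + |sin φ| * b) ^ 2 ≤ dist x y ^ 2 := by
    nlinarith [sq_nonneg (|cos φ| * b - |sin φ| * a), sq_abs (cos φ), sq_abs (sin φ),
      sin_sq_add_cos_sq φ]
  have := (abs_le_of_sq_le_sq' hcauchy dist_nonneg).2
  unfold coneLevel
  linarith

lemma exists_dist_eq_coneLevel_sub [NormedSpace ℝ F] [Nontrivial F] {φ : ℝ} (hc : cos φ ≤ 0)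
    (x : WithLp 2 (F × ℝ)) {t : ℝ} (ht : 0 ≤ t) :
    ∃ y, dist x y = t ∧ coneLevel φ y = coneLevel φ x - t := by
  obtain ⟨u, hu, hxu⟩ := exists_norm_eq_one_smul_eq x.fst
  set d : WithLp 2 (F × ℝ) := WithLp.toLp 2 ((-cos φ) • u, sin φ)
  have hd : ‖d‖ = 1 := by
    refine (pow_eq_one_iff_of_nonneg (norm_nonneg d) two_ne_zero).mp ?_
    rw [WithLp.prod_norm_sq_eq_of_L2]
    simp [d, norm_smul, hu]
  refine ⟨x + t • d, by simp [dist_eq_norm, norm_smul, hd, abs_of_nonneg ht], ?_⟩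
  have hfst : (x + t • d).fst = (‖x.fst‖ - t * cos φ) • u := by
    rw [sub_smul, hxu]
    simp [d, smul_smul, sub_eq_add_neg]
  have hpos : 0 ≤ ‖x.fst‖ - t * cos φ := by nlinarith [norm_nonneg x.fst]
  simp only [coneLevel, hfst, norm_smul, hu, Real.norm_of_nonneg hpos, WithLp.add_snd,
    WithLp.smul_snd, d, WithLp.toLp_snd, smul_eq_mul]
  linear_combination -t * sin_sq_add_cos_sq φ

theorem infDist_setOf_coneLevel_neg [NormedSpace ℝ F] [Nontrivial F] {φ : ℝ} (hc : cos φ ≤ 0)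
    (x : WithLp 2 (F × ℝ)) :
    infDist x {y | coneLevel φ y < 0} = max (coneLevel φ x) 0 := by
  have hdescend : ∀ t, max (coneLevel φ x) 0 < t →
      ∃ y ∈ {y | coneLevel φ y < 0}, dist x y = t := by
    intro t ht
    obtain ⟨y, hxy, hy⟩ := exists_dist_eq_coneLevel_sub hc x ((le_max_right _ _).trans ht.le)
    refine ⟨y, ?_, hxy⟩
    rw [mem_ofPred_eq, hy]
    linarith [le_max_left (coneLevel φ x) 0]
  have hne : {y | coneLevel φ y < 0}.Nonempty :=
    let ⟨y, hy, _⟩ := hdescend _ (lt_add_one _)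
    ⟨y, hy⟩
  refine le_antisymm (le_of_forall_gt_imp_ge_of_dense fun t ht => ?_) ?_
  · obtain ⟨y, hy, rfl⟩ := hdescend t ht
    exact infDist_le_dist_of_mem hy
  · refine max_le ((le_infDist hne).mpr fun y hy => ?_) infDist_nonneg
    linarith [coneLevel_le_add_dist φ x y, show coneLevel φ y < 0 from hy]

end ConeLevel

lemma mem_cone_iff_coneLevel_neg {n : ℕ} {φ : ℝ} (hc : cos φ ≤ 0) (hs : 0 < sin φ)
    (x : Amb n) : x ∈ cone n φ ↔ coneLevel φ x < 0 := by
  set a := ‖x.fst‖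
  set b := x.snd
  have hnorm : ‖x‖ ^ 2 = a ^ 2 + b ^ 2 := by
    rw [WithLp.prod_norm_sq_eq_of_L2, Real.norm_eq_abs, sq_abs]
  have hlast : lastCoord n x = b := rfl
  simp only [cone, coneLevel, mem_ofPred_eq, hlast, sub_neg]
  rcases lt_or_ge 0 b with hb | hb
  · have hx : x ≠ 0 := fun h => hb.ne' (by simp [b, h])
    exact iff_of_true ⟨hx, by nlinarith [norm_nonneg x]⟩ (by nlinarith [norm_nonneg x.fst])
  -- For `b ≤ 0` all quantities compared below are `≤ 0`, so squaring reverses the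
  -- inequalities, and `key` makes the two squared inequalities agree.
  have hx : ‖x‖ * cos φ < b → x ≠ 0 := fun h h0 => by
    simp only [h0, norm_zero, zero_mul] at h
    linarith
  have key : (‖x‖ * cos φ) ^ 2 - b ^ 2 = (cos φ * a) ^ 2 - (sin φ * b) ^ 2 := by
    linear_combination cos φ ^ 2 * hnorm + b ^ 2 * sin_sq_add_cos_sq φ
  have hxc : ‖x‖ * cos φ ≤ 0 := mul_nonpos_of_nonneg_of_nonpos (norm_nonneg x) hc
  have hca : cos φ * a ≤ 0 := mul_nonpos_of_nonpos_of_nonneg hc (norm_nonneg _)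
  have hsb : sin φ * b ≤ 0 := mul_nonpos_of_nonneg_of_nonpos hs.le hb
  calc (x ≠ 0 ∧ ‖x‖ * cos φ < b) ↔ ‖x‖ * cos φ < b := and_iff_right_of_imp hx
    _ ↔ b ^ 2 < (‖x‖ * cos φ) ^ 2 := by
      rw [sq_lt_sq, abs_of_nonpos hb, abs_of_nonpos hxc, neg_lt_neg_iff]
    _ ↔ (sin φ * b) ^ 2 < (cos φ * a) ^ 2 := by constructor <;> intro h <;> linarith
    _ ↔ cos φ * a < sin φ * b := by
      rw [sq_lt_sq, abs_of_nonpos hsb, abs_of_nonpos hca, neg_lt_neg_iff]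

lemma coneLevel_add_smul_eVec {n : ℕ} (φ : ℝ) (x : Amb n) (r : ℝ) :
    coneLevel φ (x + r • eVec n) = coneLevel φ x - sin φ * r := by
  have hfst : (eVec n).fst = 0 := rfl
  have hsnd : (eVec n).snd = 1 := rfl
  simp only [coneLevel, WithLp.add_fst, WithLp.add_snd, WithLp.smul_fst, WithLp.smul_snd, hfst,
    hsnd, smul_zero, add_zero, smul_eq_mul, mul_one]
  ring

/-- For `N ≥ 2` and `φ ∈ [π/2, π)`, for every `R > 0` the open
`R`-neighborhood `N[Λ^φ, R] = {x : dist(x, Λ^φ) < R}` equals the translated cone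
`Λ^φ - (R / sin φ) e_N = {x : x + (R / sin φ) e_N ∈ Λ^φ}`. -/
theorem neighborhood_of_cone_eq_translate (n : ℕ) (hn : 1 ≤ n) (φ : ℝ)
    (hφ : φ ∈ Set.Ico (Real.pi / 2) Real.pi) (R : ℝ) (hR : 0 < R) :
    {x : Amb n | Metric.infDist x (cone n φ) < R} =
      {x : Amb n | x + (R / Real.sin φ) • eVec n ∈ cone n φ} := by
  have : Nonempty (Fin n) := ⟨⟨0, hn⟩⟩
  have hc : cos φ ≤ 0 := cos_nonpos_of_pi_div_two_le_of_le hφ.1 (by linarith [hφ.2, pi_pos])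
  have hs : 0 < sin φ := sin_pos_of_pos_of_lt_pi (by linarith [hφ.1, pi_pos]) hφ.2
  have hcone : cone n φ = {y | coneLevel φ y < 0} :=
    ext fun y => mem_cone_iff_coneLevel_neg hc hs y
  ext x
  simp only [mem_ofPred_eq, hcone, infDist_setOf_coneLevel_neg hc, coneLevel_add_smul_eVec,
    mul_div_cancel₀ R hs.ne', max_lt_iff, hR, and_true, sub_neg]
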